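/- arXiv:1611.03790 — 2 statements merged into one kernel-verified Lean document; each statement's English description precedes it below -/
import Mathlib

section
/- Let C̃ be obtained from a CSS code C by the full X-type generator splitting procedure, and let ε > 0. If C is ε-Z-sound, then C̃ is ε′-Z-sound with ε′ = ε/(1 + w_X·(ε + q_X)). -/
open Matrix

/-- The weight of a vector over `F₂`: the number of nonzero entries. -/
def wt {α : Type*} [Fintype α] (v : α → ZMod 2) : ℕ :=
  (Finset.univ.filter fun j => v j ≠ 0).card

/-- Maximum weight of a row of a matrix over `F₂`. -/
def maxRowW {m α : Type*} [Fintype m] [Fintype α] (M : Matrix m α (ZMod 2)) : ℕ :=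
  Finset.univ.sup fun i => wt (M i)

/-- Maximum weight of a column of a matrix over `F₂`. -/
def maxColW {m α : Type*} [Fintype m] [Fintype α] (M : Matrix m α (ZMod 2)) : ℕ :=
  Finset.univ.sup fun j => wt fun i => M i j

/-- Total number of nonzero entries of a matrix over `F₂`. -/
def totW {m α : Type*} [Fintype m] [Fintype α] (M : Matrix m α (ZMod 2)) : ℕ :=
  ∑ i, wt (M i)

variable {N nX nZ : ℕ}

/-- Qubits of the code obtained by the full X-type generator splitting procedure:
the original `N` qubits, plus, for each row of `HX` of weight `w ≥ 4` (a "heavy" row),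
cut qubits `(1),…,(w−3)` (0-indexed below). -/
abbrev SplitQ (HX : Matrix (Fin nX) (Fin N) (ZMod 2)) : Type :=
  Fin N ⊕ Σ i : {i : Fin nX // 4 ≤ wt (HX i)}, Fin (wt (HX i.1) - 3)

/-- X-type generators of the fully split code: the rows of `HX` of weight `≤ 3`,
plus, for each heavy row, the `w−2` rows created by splitting it. -/
abbrev SplitXIdx (HX : Matrix (Fin nX) (Fin N) (ZMod 2)) : Type :=
  {i : Fin nX // ¬ 4 ≤ wt (HX i)} ⊕ Σ i : {i : Fin nX // 4 ≤ wt (HX i)}, Fin (wt (HX i.1) - 2)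

/-- X-type generator matrix of the code `C̃` obtained from `C` by applying the X-type
generator splitting step once to each row of `HX` of weight at least 4 (the result is the
same in any order).  Here `q i` enumerates, in a fixed order, the support of the heavy
row `i`.  Splitting a heavy row with support `{q₁,…,q_w}` produces `w−2` rows with
supports `{q₁,q₂,(1)}`, `{(m),q_{m+2},(m+1)}` for `m = 1,…,w−4`, and `{(w−3),q_{w−1},q_w}`,
on the original qubits together with that row's own cut qubits. -/
def splitHX (HX : Matrix (Fin nX) (Fin N) (ZMod 2))
    (q : ∀ i : {i : Fin nX // 4 ≤ wt (HX i)}, Fin (wt (HX i.1)) → Fin N) :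
    Matrix (SplitXIdx HX) (SplitQ HX) (ZMod 2) := fun r j =>
  match r, j with
  | Sum.inl i, Sum.inl p => HX i.1 p
  | Sum.inl _, Sum.inr _ => 0
  | Sum.inr ⟨i, r⟩, Sum.inl p =>
      have hw : 4 ≤ wt (HX i.1) := i.2
      if (r.val = 0 ∧ (p = q i ⟨0, by omega⟩ ∨ p = q i ⟨1, by omega⟩)) ∨
         (1 ≤ r.val ∧ r.val ≤ wt (HX i.1) - 4 ∧
           p = q i ⟨r.val + 1, by have := r.isLt; omega⟩) ∨
         (r.val = wt (HX i.1) - 3 ∧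
           (p = q i ⟨wt (HX i.1) - 2, by omega⟩ ∨ p = q i ⟨wt (HX i.1) - 1, by omega⟩))
      then 1 else 0
  | Sum.inr ⟨i, r⟩, Sum.inr ⟨i', c⟩ =>
      if i' = i ∧ (c.val = r.val ∨ c.val + 1 = r.val) then 1 else 0

/-- Z-type generator matrix of the code `C̃` obtained from `C` by the full X-type generator
splitting procedure: each row `R` of `HZ` agrees with `R` on the original qubits, and its
entry at the cut qubit `(m)` of heavy row `i` is the parity of
`|supp(R) ∩ {q_{i,1},…,q_{i,m+1}}|`. -/
def splitHZ (HX : Matrix (Fin nX) (Fin N) (ZMod 2)) (HZ : Matrix (Fin nZ) (Fin N) (ZMod 2))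
    (q : ∀ i : {i : Fin nX // 4 ≤ wt (HX i)}, Fin (wt (HX i.1)) → Fin N) :
    Matrix (Fin nZ) (SplitQ HX) (ZMod 2) := fun R j =>
  match j with
  | Sum.inl p => HZ R p
  | Sum.inr ⟨i, m⟩ => ∑ a : Fin (wt (HX i.1)), if a.val ≤ m.val + 1 then HZ R (q i a) else 0

/-- A CSS code (given by its X-type generator matrix `HX`) is `ε`-Z-sound if for every
`v` with `H_X·v ≠ 0` there exists `u ∈ ker(H_X)` with `wt(H_X·v) ≥ ε·wt(v+u)`. -/
def ZSound {m α : Type*} [Fintype m] [Fintype α] (ε : ℝ) (HX : Matrix m α (ZMod 2)) : Prop :=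
  ∀ v : α → ZMod 2, HX.mulVec v ≠ 0 →
    ∃ u : α → ZMod 2, HX.mulVec u = 0 ∧ ε * (wt (v + u) : ℝ) ≤ (wt (HX.mulVec v) : ℝ)

/-!
Restrict `v` to the original qubits, `v₀`, and use the soundness of `C` to get `u ∈ ker H_X`
with `ε wt(v₀ + u) ≤ wt(H_X v₀)`. The vector `u` lifts to `ker H̃_X` by giving each cut qubit
`(m)` of a split check the parity of `u` on its first `m + 1` support qubits. Put
`d = v + lift u`, so `H̃_X d = H̃_X v`. On the chain replacing a check, the cut values of `d`
are prefix sums of the chain's syndrome plus prefix sums of `d₀` on the check's support. So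
the at most `w_X` cut qubits of a chain can be nonzero only if the chain has a nonzero
syndrome or `d₀` meets the check's support, which gives
`wt(d) ≤ wt(d₀) + w_X (wt(H̃_X v) + q_X wt(d₀))`. The checks of a chain add up to the
original check, so `wt(H_X v₀) ≤ wt(H̃_X v)`, and `ε wt(d₀) ≤ wt(H̃_X v)` finishes the proof.
-/

theorem wt_eq_sum_ite {α : Type*} [Fintype α] (v : α → ZMod 2) :
    wt v = ∑ j, if v j ≠ 0 then 1 else 0 :=
  Finset.card_filter _ _

theorem wt_eq_zero_iff {α : Type*} [Fintype α] {v : α → ZMod 2} : wt v = 0 ↔ v = 0 :=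
  hammingNorm_eq_zero

theorem wt_le_card {α : Type*} [Fintype α] (v : α → ZMod 2) : wt v ≤ Fintype.card α :=
  hammingNorm_le_card_fintype

theorem wt_sum_type {α β : Type*} [Fintype α] [Fintype β] (x : α ⊕ β → ZMod 2) :
    wt x = wt (x ∘ Sum.inl) + wt (x ∘ Sum.inr) := by
  simp only [wt_eq_sum_ite, Fintype.sum_sum_type, Function.comp_apply]

theorem wt_sigma {ι : Type*} [Fintype ι] {γ : ι → Type*} [∀ i, Fintype (γ i)]
    (x : (Σ i, γ i) → ZMod 2) : wt x = ∑ i, wt fun c => x ⟨i, c⟩ := by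
  simp only [wt_eq_sum_ite, Fintype.sum_sigma]

theorem wt_eq_sum_subtype_add_sum_subtype {α : Type*} [Fintype α] (v : α → ZMod 2)
    (p : α → Prop) [DecidablePred p] :
    wt v = (∑ j : {j // p j}, if v j ≠ 0 then 1 else 0)
      + ∑ j : {j // ¬ p j}, if v j ≠ 0 then 1 else 0 := by
  rw [wt_eq_sum_ite, Fintype.sum_subtype_add_sum_subtype p fun j => if v j ≠ 0 then 1 else 0]

theorem sum_wt_mul_le_maxColW {m α : Type*} [Fintype m] [Fintype α]
    (M : Matrix m α (ZMod 2)) (d : α → ZMod 2) :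
    ∑ i, wt (fun p => M i p * d p) ≤ maxColW M * wt d := by
  have hcol : ∀ p, wt (fun i => M i p) ≤ maxColW M :=
    fun p => Finset.le_sup (f := fun p => wt fun i => M i p) (Finset.mem_univ p)
  calc ∑ i, wt (fun p => M i p * d p)
      = ∑ p, ∑ i, if M i p * d p ≠ 0 then 1 else 0 := by
        simp only [wt_eq_sum_ite]; exact Finset.sum_comm
    _ ≤ ∑ p, maxColW M * if d p ≠ 0 then 1 else 0 := by
        refine Finset.sum_le_sum fun p _ => ?_
        by_cases hp : d p = 0
        · simp [hp]
        · simpa [hp, wt_eq_sum_ite] using hcol p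
    _ = maxColW M * wt d := by rw [← Finset.mul_sum, wt_eq_sum_ite]

theorem ZSound.exists_ker_le {m α : Type*} [Fintype m] [Fintype α] {ε : ℝ}
    {H : Matrix m α (ZMod 2)} (h : ZSound ε H) (v : α → ZMod 2) :
    ∃ u, H *ᵥ u = 0 ∧ ε * (wt (v + u) : ℝ) ≤ (wt (H *ᵥ v) : ℝ) := by
  by_cases hv : H *ᵥ v = 0
  · have hvv : v + v = 0 := funext fun j => CharTwo.add_self_eq_zero (v j)
    exact ⟨v, hv, by simp [hvv, wt_eq_zero_iff.2]⟩
  · exact h v hv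

section PrefixSum

variable {M : Type*} {n : ℕ}

def prefixSum [AddCommMonoid M] (f : Fin n → M) (m : ℕ) : M :=
  ∑ a, if a.val ≤ m then f a else 0

theorem prefixSum_of_le [AddCommMonoid M] (f : Fin n → M) {m : ℕ} (h : n ≤ m + 1) :
    prefixSum f m = ∑ a, f a :=
  Finset.sum_congr rfl fun a _ => if_pos (by omega)

theorem eq_zero_of_prefixSum_eq_zero [AddCommGroup M] {f : Fin n → M}
    (h : ∀ m, prefixSum f m = 0) : f = 0 := by
  funext a
  have hdiff : ∀ m, prefixSum f m - (∑ b, if b.val + 1 ≤ m then f b else 0)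
      = ∑ b, if b.val = m then f b else 0 := by
    intro m
    simp only [prefixSum, ← Finset.sum_sub_distrib]
    exact Finset.sum_congr rfl fun b _ => by split_ifs <;> first | omega | simp
  have hsingle : (∑ b, if b.val = a.val then f b else 0) = f a := by
    simp [Fin.val_inj]
  rw [← hsingle, ← hdiff]
  rcases Nat.eq_zero_or_eq_succ_pred a.val with h0 | hsucc
  · rw [h0, h]; simp
  · have hpred : (∑ b, if b.val + 1 ≤ a.val then f b else 0) = prefixSum f (a.val - 1) :=
      Finset.sum_congr rfl fun b _ => by congr 1; simp only [eq_iff_iff]; omega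
    rw [hpred, h, h, sub_zero, Pi.zero_apply]

end PrefixSum

section Chain

variable {w : ℕ}

/-- The syndrome of the chain of weight-3 checks replacing a check of weight `w`, with values
`y` on the check's support and `z` on its cut qubits: support qubit `a` lies in check
`min (a - 1) (w - 3)` and cut qubit `c` in checks `c` and `c + 1` (all indices from `0`). -/
def chainSyndrome (y : Fin w → ZMod 2) (z : Fin (w - 3) → ZMod 2) (r : Fin (w - 2)) : ZMod 2 :=
  (∑ a, if min (a.val - 1) (w - 3) = r.val then y a else 0) +
    ∑ c, if c.val = r.val ∨ c.val + 1 = r.val then z c else 0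

theorem prefixSum_chainSyndrome (y : Fin w → ZMod 2) (z : Fin (w - 3) → ZMod 2)
    (hw : 3 ≤ w) (m : ℕ) :
    prefixSum (chainSyndrome y z) m =
      (∑ a, if min (a.val - 1) (w - 3) ≤ m then y a else 0) +
        ∑ c, if c.val = m then z c else 0 := by
  simp only [prefixSum, chainSyndrome, ite_add_zero, Finset.sum_add_distrib, Finset.ite_sum_zero]
  congr 1 <;> rw [Finset.sum_comm]
  · refine Finset.sum_congr rfl fun a _ => ?_
    rw [Finset.sum_eq_single_of_mem (⟨min (a.val - 1) (w - 3), by omega⟩ : Fin (w - 2))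
      (Finset.mem_univ _)]
    · simp
    · intro r _ hr
      have hne : min (a.val - 1) (w - 3) ≠ r.val := fun h => hr (Fin.ext h.symm)
      simp [hne]
  · refine Finset.sum_congr rfl fun c _ => ?_
    rw [Finset.sum_eq_add_of_mem (⟨c.val, by omega⟩ : Fin (w - 2)) ⟨c.val + 1, by omega⟩
      (Finset.mem_univ _) (Finset.mem_univ _) (by simp)]
    · simp only [true_or, or_true, if_true]
      -- over `ZMod 2`, a cut qubit lying in two checks `≤ m` cancels
      split_ifs <;> first | omega | simp [CharTwo.add_self_eq_zero]
    · intro r _ hr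
      have hne : ¬(c.val = r.val ∨ c.val + 1 = r.val) := by
        simp only [ne_eq, Fin.ext_iff] at hr; omega
      simp [hne]

theorem prefixSum_chainSyndrome_of_lt (y : Fin w → ZMod 2) (z : Fin (w - 3) → ZMod 2)
    (c : Fin (w - 3)) : prefixSum (chainSyndrome y z) c = prefixSum y (c.val + 1) + z c := by
  have hc := c.isLt
  rw [prefixSum_chainSyndrome y z (by omega)]
  congr 1
  · exact Finset.sum_congr rfl fun a _ => if_congr (by omega) rfl rfl
  · simp [Fin.val_inj]

theorem prefixSum_chainSyndrome_of_le (y : Fin w → ZMod 2) (z : Fin (w - 3) → ZMod 2)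
    (hw : 3 ≤ w) {m : ℕ} (hm : w - 3 ≤ m) : prefixSum (chainSyndrome y z) m = ∑ a, y a := by
  rw [prefixSum_chainSyndrome y z hw]
  have hc (c : Fin (w - 3)) : c.val ≠ m := by have := c.isLt; omega
  simp [hc, hm]

theorem sum_chainSyndrome (y : Fin w → ZMod 2) (z : Fin (w - 3) → ZMod 2) (hw : 3 ≤ w) :
    ∑ r, chainSyndrome y z r = ∑ a, y a := by
  rw [← prefixSum_chainSyndrome_of_le y z hw le_rfl, prefixSum_of_le _ (by omega)]

theorem eq_zero_of_chainSyndrome_eq_zero {y : Fin w → ZMod 2} {z : Fin (w - 3) → ZMod 2}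
    (hsyn : chainSyndrome y z = 0) (hy : y = 0) : z = 0 := by
  subst hy
  funext c
  simpa [hsyn, prefixSum] using (prefixSum_chainSyndrome_of_lt 0 z c).symm

theorem chainSyndrome_prefixSum_eq_zero (y : Fin w → ZMod 2) (hw : 3 ≤ w) (hy : ∑ a, y a = 0) :
    chainSyndrome y (fun c => prefixSum y (c.val + 1)) = 0 := by
  refine eq_zero_of_prefixSum_eq_zero fun m => ?_
  by_cases hm : m < w - 3
  · rw [prefixSum_chainSyndrome_of_lt _ _ ⟨m, hm⟩, CharTwo.add_self_eq_zero]
  · rw [prefixSum_chainSyndrome_of_le _ _ hw (by omega), hy]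

end Chain

theorem sum_mul_eq_sum_comp {α ι : Type*} [Fintype α] [DecidableEq α] {q : ι → α}
    (hq : Function.Injective q) (s : Finset ι) {R : α → ZMod 2}
    (hR : ∀ p, R p ≠ 0 ↔ p ∈ s.image q) (x : α → ZMod 2) :
    ∑ p, R p * x p = ∑ a ∈ s, x (q a) := by
  have hR01 (p : α) : R p * x p = if p ∈ s.image q then x p else 0 := by
    by_cases hp : R p = 0
    · have hp' : p ∉ s.image q := fun h => (hR p).2 h hp
      simp [hp, hp']
    · simp [(by decide : ∀ z : ZMod 2, z ≠ 0 → z = 1) _ hp, (hR p).1 hp]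
  rw [Finset.sum_congr rfl fun p _ => hR01 p, Finset.sum_ite_mem, Finset.univ_inter,
    Finset.sum_image hq.injOn]

section Split

variable (HX : Matrix (Fin nX) (Fin N) (ZMod 2))
  (q : ∀ i : {i : Fin nX // 4 ≤ wt (HX i)}, Fin (wt (HX i.1)) → Fin N)

theorem mulVec_apply_eq_sum_comp (hinj : ∀ i, Function.Injective (q i))
    (hrange : ∀ i p, HX i.1 p ≠ 0 ↔ p ∈ Set.range (q i))
    (i : {i : Fin nX // 4 ≤ wt (HX i)}) (y : Fin N → ZMod 2) :
    (HX *ᵥ y) i.1 = ∑ a, y (q i a) :=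
  sum_mul_eq_sum_comp (hinj i) Finset.univ (fun p => by simpa using hrange i p) y

theorem splitHX_mulVec_inl (x : SplitQ HX → ZMod 2) (i : {i : Fin nX // ¬ 4 ≤ wt (HX i)}) :
    (splitHX HX q *ᵥ x) (Sum.inl i) = (HX *ᵥ (x ∘ Sum.inl)) i.1 := by
  simp [splitHX, mulVec, dotProduct, Fintype.sum_sum_type]

theorem splitHX_inr_inl_ne_zero_iff (i : {i : Fin nX // 4 ≤ wt (HX i)})
    (r : Fin (wt (HX i.1) - 2)) (p : Fin N) :
    splitHX HX q (Sum.inr ⟨i, r⟩) (Sum.inl p) ≠ 0 ↔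
      ∃ a, min (a.val - 1) (wt (HX i.1) - 3) = r.val ∧ q i a = p := by
  have hw : 4 ≤ wt (HX i.1) := i.2
  simp only [splitHX, ne_eq, ite_eq_right_iff, one_ne_zero, imp_false, not_not]
  constructor
  · rintro (⟨h0, rfl | rfl⟩ | ⟨h1, h2, rfl⟩ | ⟨h3, rfl | rfl⟩) <;>
      exact ⟨_, by dsimp only; omega, rfl⟩
  · rintro ⟨a, ha, rfl⟩
    have key (k : ℕ) (hk : k < wt (HX i.1)) (h : a.val = k) : q i a = q i ⟨k, hk⟩ :=
      congrArg (q i) (Fin.ext h)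
    rcases (show a.val = 0 ∨ a.val = 1 ∨ (2 ≤ a.val ∧ a.val ≤ wt (HX i.1) - 3) ∨
        a.val = wt (HX i.1) - 2 ∨ a.val = wt (HX i.1) - 1 by omega)
      with h | h | h | h | h
    · exact Or.inl ⟨by omega, Or.inl (key _ _ h)⟩
    · exact Or.inl ⟨by omega, Or.inr (key _ _ h)⟩
    · exact Or.inr (Or.inl ⟨by omega, by omega, key _ _ (by omega)⟩)
    · exact Or.inr (Or.inr ⟨by omega, Or.inl (key _ _ h)⟩)
    · exact Or.inr (Or.inr ⟨by omega, Or.inr (key _ _ h)⟩)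

theorem splitHX_mulVec_inr (hinj : ∀ i, Function.Injective (q i)) (x : SplitQ HX → ZMod 2)
    (i : {i : Fin nX // 4 ≤ wt (HX i)}) (r : Fin (wt (HX i.1) - 2)) :
    (splitHX HX q *ᵥ x) (Sum.inr ⟨i, r⟩) =
      chainSyndrome (fun a => x (Sum.inl (q i a))) (fun c => x (Sum.inr ⟨i, c⟩)) r := by
  simp only [mulVec, dotProduct, Fintype.sum_sum_type, Fintype.sum_sigma, chainSyndrome]
  congr 1
  · rw [sum_mul_eq_sum_comp (hinj i)
      (Finset.univ.filter fun a => min (a.val - 1) (wt (HX i.1) - 3) = r.val) (fun p => by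
      simpa using splitHX_inr_inl_ne_zero_iff HX q i r p), Finset.sum_filter]
  · rw [Fintype.sum_eq_single i]
    · simp [splitHX]
    · intro i' hi'
      simp [splitHX, hi']

def splitLift (u : Fin N → ZMod 2) : SplitQ HX → ZMod 2
  | Sum.inl p => u p
  | Sum.inr ⟨i, c⟩ => prefixSum (fun a => u (q i a)) (c.val + 1)

variable {HX q} (hinj : ∀ i, Function.Injective (q i))
  (hrange : ∀ i p, HX i.1 p ≠ 0 ↔ p ∈ Set.range (q i))
include hinj hrange

theorem splitHX_mulVec_splitLift {u : Fin N → ZMod 2} (hu : HX *ᵥ u = 0) :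
    splitHX HX q *ᵥ splitLift HX q u = 0 := by
  funext j
  rcases j with i | ⟨i, r⟩
  · exact (splitHX_mulVec_inl HX q _ i).trans (congrFun hu i.1)
  · rw [splitHX_mulVec_inr HX q hinj]
    refine congrFun (chainSyndrome_prefixSum_eq_zero _ (by have := i.2; omega) ?_) r
    exact (mulVec_apply_eq_sum_comp HX q hinj hrange i u).symm.trans (congrFun hu i.1)

theorem wt_mulVec_le_wt_splitHX_mulVec (x : SplitQ HX → ZMod 2) :
    wt (HX *ᵥ (x ∘ Sum.inl)) ≤ wt (splitHX HX q *ᵥ x) := by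
  rw [wt_eq_sum_subtype_add_sum_subtype _ fun i => 4 ≤ wt (HX i), wt_sum_type, wt_sigma, add_comm]
  refine add_le_add (le_of_eq ?_) (Finset.sum_le_sum fun i _ => ?_)
  · simp only [wt_eq_sum_ite, Function.comp_apply, splitHX_mulVec_inl]
  · split_ifs with hi
    · rw [Nat.one_le_iff_ne_zero, Ne, wt_eq_zero_iff]
      intro hblock
      refine hi ?_
      rw [mulVec_apply_eq_sum_comp HX q hinj hrange,
        ← sum_chainSyndrome _ (fun c => x (Sum.inr ⟨i, c⟩)) (by have := i.2; omega)]
      exact Finset.sum_eq_zero fun r _ =>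
        (splitHX_mulVec_inr HX q hinj x i r).symm.trans (congrFun hblock r)
    · exact Nat.zero_le _

theorem wt_cut_le (x : SplitQ HX → ZMod 2) (i : {i : Fin nX // 4 ≤ wt (HX i)}) :
    wt (fun c => x (Sum.inr ⟨i, c⟩)) ≤
      maxRowW HX * (wt (fun r => (splitHX HX q *ᵥ x) (Sum.inr ⟨i, r⟩)) +
        wt (fun p => HX i.1 p * x (Sum.inl p))) := by
  by_cases h : wt (fun r => (splitHX HX q *ᵥ x) (Sum.inr ⟨i, r⟩)) +
      wt (fun p => HX i.1 p * x (Sum.inl p)) = 0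
  · rw [Nat.add_eq_zero_iff, wt_eq_zero_iff, wt_eq_zero_iff] at h
    have hsyn : chainSyndrome (fun a => x (Sum.inl (q i a))) (fun c => x (Sum.inr ⟨i, c⟩)) = 0 :=
      funext fun r => (splitHX_mulVec_inr HX q hinj x i r).symm.trans (congrFun h.1 r)
    have hy : (fun a => x (Sum.inl (q i a))) = 0 := funext fun a =>
      (mul_eq_zero.1 (congrFun h.2 (q i a))).resolve_left ((hrange i _).2 ⟨a, rfl⟩)
    rw [eq_zero_of_chainSyndrome_eq_zero hsyn hy, wt_eq_zero_iff.2 rfl]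
    exact Nat.zero_le _
  · calc wt (fun c => x (Sum.inr ⟨i, c⟩)) ≤ wt (HX i.1) - 3 := by
          simpa using wt_le_card (fun c => x (Sum.inr ⟨i, c⟩))
      _ ≤ maxRowW HX := (Nat.sub_le _ _).trans
          (Finset.le_sup (f := fun i => wt (HX i)) (Finset.mem_univ i.1))
      _ ≤ _ := Nat.le_mul_of_pos_right _ (Nat.pos_of_ne_zero h)

theorem sum_wt_cut_le (x : SplitQ HX → ZMod 2) :
    ∑ i, wt (fun c => x (Sum.inr ⟨i, c⟩)) ≤
      maxRowW HX * (wt (splitHX HX q *ᵥ x) + maxColW HX * wt (x ∘ Sum.inl)) := by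
  have hblocks : ∑ i, wt (fun r => (splitHX HX q *ᵥ x) (Sum.inr ⟨i, r⟩)) ≤
      wt (splitHX HX q *ᵥ x) := by
    rw [wt_sum_type, wt_sigma]
    exact le_add_self
  have hrows : ∑ i : {i : Fin nX // 4 ≤ wt (HX i)}, wt (fun p => HX i.1 p * x (Sum.inl p)) ≤
      maxColW HX * wt (x ∘ Sum.inl) := by
    refine le_trans ?_ (sum_wt_mul_le_maxColW HX (x ∘ Sum.inl))
    rw [← Fintype.sum_subtype_add_sum_subtype fun i => 4 ≤ wt (HX i)]
    exact le_self_add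
  calc ∑ i, wt (fun c => x (Sum.inr ⟨i, c⟩))
      ≤ ∑ i, maxRowW HX * (wt (fun r => (splitHX HX q *ᵥ x) (Sum.inr ⟨i, r⟩)) +
          wt (fun p => HX i.1 p * x (Sum.inl p))) :=
        Finset.sum_le_sum fun i _ => wt_cut_le hinj hrange x i
    _ ≤ _ := by
        rw [← Finset.mul_sum, Finset.sum_add_distrib]
        exact Nat.mul_le_mul_left _ (add_le_add hblocks hrows)

end Split

theorem stmt17_general (HX : Matrix (Fin nX) (Fin N) (ZMod 2))
    (q : ∀ i : {i : Fin nX // 4 ≤ wt (HX i)}, Fin (wt (HX i.1)) → Fin N)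
    (hinj : ∀ i, Function.Injective (q i))
    (hrange : ∀ i p, HX i.1 p ≠ 0 ↔ p ∈ Set.range (q i))
    (ε : ℝ) (hε : 0 < ε) (hsound : ZSound ε HX) :
    ZSound (ε / (1 + (maxRowW HX : ℝ) * (ε + (maxColW HX : ℝ)))) (splitHX HX q) := by
  intro v _
  obtain ⟨u, hu, hεu⟩ := hsound.exists_ker_le (v ∘ Sum.inl)
  have hlift := splitHX_mulVec_splitLift hinj hrange hu
  refine ⟨splitLift HX q u, hlift, ?_⟩
  have hsyn : splitHX HX q *ᵥ (v + splitLift HX q u) = splitHX HX q *ᵥ v := by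
    rw [mulVec_add, hlift, add_zero]
  have horig : (v + splitLift HX q u) ∘ Sum.inl = v ∘ Sum.inl + u := rfl
  have hcut := sum_wt_cut_le hinj hrange (v + splitLift HX q u)
  rw [hsyn, horig] at hcut
  have hεs : ε * wt (v ∘ Sum.inl + u) ≤ (wt (splitHX HX q *ᵥ v) : ℝ) :=
    hεu.trans (Nat.cast_le.2 (wt_mulVec_le_wt_splitHX_mulVec hinj hrange v))
  have hεcut := mul_le_mul_of_nonneg_left ((Nat.cast_le (α := ℝ)).2 hcut) hε.le
  have hWQ := mul_le_mul_of_nonneg_left hεs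
    (by positivity : (0 : ℝ) ≤ maxRowW HX * maxColW HX)
  rw [wt_sum_type, wt_sigma, horig, div_mul_eq_mul_div, div_le_iff₀ (by positivity)]
  simp only [Function.comp_apply]
  push_cast at hεcut ⊢
  linarith

/-- If `C` is `ε`-Z-sound, then the code `C̃` obtained from `C` by the
full X-type generator splitting procedure is `ε′`-Z-sound with
`ε′ = ε/(1 + w_X·(ε + q_X))`. -/
theorem stmt17 (HX : Matrix (Fin nX) (Fin N) (ZMod 2)) (HZ : Matrix (Fin nZ) (Fin N) (ZMod 2))
    (hCSS : HX * HZ.transpose = 0)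
    (q : ∀ i : {i : Fin nX // 4 ≤ wt (HX i)}, Fin (wt (HX i.1)) → Fin N)
    (hinj : ∀ i, Function.Injective (q i))
    (hrange : ∀ i p, HX i.1 p ≠ 0 ↔ p ∈ Set.range (q i))
    (ε : ℝ) (hε : 0 < ε) (hsound : ZSound ε HX) :
    ZSound (ε / (1 + (maxRowW HX : ℝ) * (ε + (maxColW HX : ℝ)))) (splitHX HX q) :=
  stmt17_general HX q hinj hrange ε hε hsound
end

section
/- Let C be a CSS code, let l ≥ 2 be an integer, and let D be the fully thickened code of C with parameter l. If C is ε-X-sound for some ε > 0, then D is ε′-X-sound with ε′ = ε/(l·(1+ε)). -/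
open Matrix

variable {N nX nZ : ℕ}

/-- Qubits of the thickened code: qubits `(q,k)` for `q` a qubit of `C` and `k ∈ {1,…,l}`
(0-indexed below), together with qubits `[s,k]` for `s` a row of `H_X` and
`k ∈ {1,…,l−1}`. -/
abbrev TQubit (N nX l : ℕ) : Type := (Fin N × Fin l) ⊕ (Fin nX × Fin (l - 1))

/-- Row index type of the Z-type generator matrix of the thickened code: one generator for
each row of `H_Z` (type (i)), and one for each pair of a qubit `q` of `C` and
`k ∈ {1,…,l−1}` (type (ii)). -/
abbrev TZIdx (N nZ l : ℕ) : Type := Fin nZ ⊕ (Fin N × Fin (l - 1))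

/-- X-type generator matrix of the thickened code: for each row `s` of `HX` with support
`{q₁,…,q_w}` and each `k ∈ {1,…,l}` (0-indexed here), one generator with support
`{(q₁,k),…,(q_w,k)} ∪ {[s,k−1],[s,k]}` (with `[s,0]`, `[s,l]` omitted at the ends). -/
def thickHX (HX : Matrix (Fin nX) (Fin N) (ZMod 2)) (l : ℕ) :
    Matrix (Fin nX × Fin l) (TQubit N nX l) (ZMod 2) := fun s j =>
  match s, j with
  | (s, k), Sum.inl (p, k') => if k' = k then HX s p else 0
  | (s, k), Sum.inr (s', k') =>
      if s' = s ∧ ((k'.val = k.val) ∨ (k'.val + 1 = k.val)) then 1 else 0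

/-- Z-type generator matrix of the thickened code with choice function `κ`:
(i) for each row `r` of `HZ` with support `{q₁,…,q_w}`, one generator with support
`{(q₁,κ(r)),…,(q_w,κ(r))}`; (ii) for each qubit `q` of `C` and each `k ∈ {1,…,l−1}`
(0-indexed here), one generator with support
`{(q,k),(q,k+1)} ∪ {[s,k] : row s of HX acts on q}`. -/
def thickHZ (HX : Matrix (Fin nX) (Fin N) (ZMod 2)) (HZ : Matrix (Fin nZ) (Fin N) (ZMod 2))
    (l : ℕ) (κ : Fin nZ → Fin l) :
    Matrix (TZIdx N nZ l) (TQubit N nX l) (ZMod 2) := fun r j =>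
  match r, j with
  | Sum.inl R, Sum.inl (p, k) => if k = κ R then HZ R p else 0
  | Sum.inl _, Sum.inr _ => 0
  | Sum.inr (p, k), Sum.inl (p', k') =>
      if p' = p ∧ ((k'.val = k.val) ∨ (k'.val = k.val + 1)) then 1 else 0
  | Sum.inr (p, k), Sum.inr (s, k') => if k'.val = k.val then HX s p else 0

/-- Z-type generator matrix of the *fully thickened* code `D`: for each row `r` of `HZ`
and EACH `k ∈ {1,…,l}`, one generator with support `{(q₁,k),…,(q_w,k)}` (type (i)),
together with the type (ii) generators with supports
`{(q,k),(q,k+1)} ∪ {[s,k] : row s of HX acts on q}`. -/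
def fullThickHZ (HX : Matrix (Fin nX) (Fin N) (ZMod 2)) (HZ : Matrix (Fin nZ) (Fin N) (ZMod 2))
    (l : ℕ) :
    Matrix ((Fin nZ × Fin l) ⊕ (Fin N × Fin (l - 1))) (TQubit N nX l) (ZMod 2) := fun r j =>
  match r, j with
  | Sum.inl (R, k), Sum.inl (p, k') => if k' = k then HZ R p else 0
  | Sum.inl _, Sum.inr _ => 0
  | Sum.inr (p, k), Sum.inl (p', k') =>
      if p' = p ∧ ((k'.val = k.val) ∨ (k'.val = k.val + 1)) then 1 else 0
  | Sum.inr (p, k), Sum.inr (s, k') => if k'.val = k.val then HX s p else 0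

/-- A CSS code (given by its Z-type generator matrix `HZ`) is `ε`-X-sound if for every
`v` with `H_Z·v ≠ 0` there exists `u ∈ ker(H_Z)` with `wt(H_Z·v) ≥ ε·wt(v+u)`. -/
def XSound {m α : Type*} [Fintype m] [Fintype α] (ε : ℝ) (HZ : Matrix m α (ZMod 2)) : Prop :=
  ∀ v : α → ZMod 2, HZ.mulVec v ≠ 0 →
    ∃ u : α → ZMod 2, HZ.mulVec u = 0 ∧ ε * (wt (v + u) : ℝ) ≤ (wt (HZ.mulVec v) : ℝ)

/-!
Given `v` with syndrome `S`, write `σ_k` for the bits of `S` on the type (i) generators of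
level `k` and `τ_j` for those on the type (ii) generators between levels `j` and `j + 1`.
Since `H_Z H_Xᵀ = 0`, the `H_X`-part of `τ_j` is invisible to `H_Z`, so `H_Z τ_j = σ_j + σ_{j+1}`.
Soundness of `C` corrects the bottom layer of `v` to some `d` with `ε·wt d ≤ wt σ_0`; then the
vector with layers `d + τ_0 + ⋯ + τ_{k-1}` and no bridge qubits has syndrome `S` again, by
telescoping. It differs from `v` by an element of `ker(H_Z^D)`, and has weight at most
`l·(wt d + ∑ wt τ_j) ≤ l·(1/ε + 1)·wt S`.
-/

lemma add_self_eq_zero_of_zmod_two {α : Type*} (x : α → ZMod 2) : x + x = 0 :=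
  funext fun _ => CharTwo.add_self_eq_zero _

section Weight

variable {α β : Type*} [Fintype α] [Fintype β]

@[simp]
lemma wt_zero : wt (0 : α → ZMod 2) = 0 := by
  simp [wt]

lemma wt_add_le (x y : α → ZMod 2) : wt (x + y) ≤ wt x + wt y := by
  classical
  refine (Finset.card_le_card fun j hj => ?_).trans (Finset.card_union_le _ _)
  by_contra h
  simp_all

lemma wt_comp_le {e : β → α} (he : Function.Injective e) (x : α → ZMod 2) :
    wt (x ∘ e) ≤ wt x :=
  Finset.card_le_card_of_injOn e (fun j hj => by simpa using hj) he.injOn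

lemma wt_sumElim (x : α → ZMod 2) (y : β → ZMod 2) : wt (Sum.elim x y) = wt x + wt y := by
  simp only [wt, Finset.card_filter, Fintype.sum_sum_type]
  rfl

lemma wt_prod (x : α × β → ZMod 2) : wt x = ∑ b, wt fun a => x (a, b) := by
  simp only [wt, Finset.card_filter, Fintype.sum_prod_type]
  exact Finset.sum_comm

lemma wt_partialSum_le {m : ℕ} (τ : Fin m → α → ZMod 2) (k : Fin (m + 1)) :
    wt (Fin.partialSum τ k) ≤ ∑ j, wt (τ j) :=
  calc wt (Fin.partialSum τ k)
      ≤ (((List.ofFn τ).take k).map wt).sum :=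
        List.le_sum_of_subadditive wt wt_zero.le wt_add_le _
    _ ≤ ((List.ofFn τ).map wt).sum :=
        ((List.take_sublist _ _).map wt).sum_le_sum fun _ _ => Nat.zero_le _
    _ = ∑ j, wt (τ j) := by simp [List.sum_ofFn]

end Weight

lemma XSound.exists_correction {m α : Type*} [Fintype m] [Fintype α] {ε : ℝ}
    {H : Matrix m α (ZMod 2)} (h : XSound ε H) (c : α → ZMod 2) :
    ∃ w, H *ᵥ w = 0 ∧ ε * (wt (c + w) : ℝ) ≤ (wt (H *ᵥ c) : ℝ) := by
  by_cases hc : H *ᵥ c = 0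
  · exact ⟨c, hc, by simp [add_self_eq_zero_of_zmod_two]⟩
  · exact h c hc

lemma Matrix.mulVec_partialSum {R m n : Type*} [NonUnitalNonAssocSemiring R] [Fintype n] {k : ℕ}
    (A : Matrix m n R) (τ : Fin k → n → R) (i : Fin (k + 1)) :
    A *ᵥ Fin.partialSum τ i = Fin.partialSum (fun j => A *ᵥ τ j) i := by
  induction i using Fin.inductionOn with
  | zero => simp
  | succ i ih => simp [Fin.partialSum_succ, mulVec_add, ih]

lemma add_partialSum_telescope {ι : Type*} {m : ℕ} (f : Fin (m + 1) → ι → ZMod 2)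
    (k : Fin (m + 1)) : f 0 + Fin.partialSum (fun j => f j.castSucc + f j.succ) k = f k := by
  induction k using Fin.inductionOn with
  | zero => simp
  | succ k ih =>
    rw [Fin.partialSum_succ, ← add_assoc, ih, ← add_assoc, add_self_eq_zero_of_zmod_two,
      zero_add]

lemma div_mul_le_of_le_mul_add {ε L a d t s : ℝ} (hε : 0 < ε) (hL : 0 < L)
    (ha : a ≤ L * (d + t)) (hd : ε * d ≤ s) (ht : t ≤ s) : ε / (L * (1 + ε)) * a ≤ s := by
  rw [div_mul_eq_mul_div, div_le_iff₀ (by positivity)]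
  nlinarith [mul_le_mul_of_nonneg_left ha hε.le, mul_le_mul_of_nonneg_left hd hL.le,
    mul_le_mul_of_nonneg_left ht (mul_pos hε hL).le]

section FullThickening

-- For `l = m + 1` the rungs are indexed by `Fin m`, which is defeq to `Fin (l - 1)`.
variable {m l : ℕ}

abbrev FullTZIdx (N nZ l : ℕ) : Type := (Fin nZ × Fin l) ⊕ (Fin N × Fin (l - 1))

def layer (x : TQubit N nX l → ZMod 2) (k : Fin l) (q : Fin N) : ZMod 2 := x (.inl (q, k))

def bridge (x : TQubit N nX l → ZMod 2) (j : Fin (l - 1)) (s : Fin nX) : ZMod 2 :=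
  x (.inr (s, j))

def levelSyndrome (S : FullTZIdx N nZ l → ZMod 2) (k : Fin l) (R : Fin nZ) : ZMod 2 :=
  S (.inl (R, k))

def rungSyndrome (S : FullTZIdx N nZ l → ZMod 2) (j : Fin (l - 1)) (q : Fin N) : ZMod 2 :=
  S (.inr (q, j))

lemma syndrome_ext {S S' : FullTZIdx N nZ l → ZMod 2}
    (hlevel : ∀ k, levelSyndrome S k = levelSyndrome S' k)
    (hrung : ∀ j, rungSyndrome S j = rungSyndrome S' j) : S = S' := by
  funext r
  rcases r with ⟨R, k⟩ | ⟨q, j⟩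
  · exact congrFun (hlevel k) R
  · exact congrFun (hrung j) q

lemma wt_levelSyndrome_le (S : FullTZIdx N nZ l → ZMod 2) (k : Fin l) :
    wt (levelSyndrome S k) ≤ wt S :=
  wt_comp_le (e := fun R : Fin nZ => (.inl (R, k) : FullTZIdx N nZ l))
    (fun _ _ h => by simpa using h) S

lemma sum_wt_rungSyndrome_le (S : FullTZIdx N nZ l → ZMod 2) :
    ∑ j, wt (rungSyndrome S j) ≤ wt S :=
  calc ∑ j, wt (rungSyndrome S j) = wt (S ∘ Sum.inr) := by rw [wt_prod (S ∘ Sum.inr)]; rfl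
    _ ≤ wt S := wt_comp_le Sum.inr_injective S

variable (HX : Matrix (Fin nX) (Fin N) (ZMod 2)) (HZ : Matrix (Fin nZ) (Fin N) (ZMod 2))

lemma levelSyndrome_fullThickHZ_mulVec (x : TQubit N nX l → ZMod 2) (k : Fin l) :
    levelSyndrome (fullThickHZ HX HZ l *ᵥ x) k = HZ *ᵥ layer x k := by
  funext R
  simp [levelSyndrome, layer, mulVec, dotProduct, fullThickHZ, Fintype.sum_sum_type,
    Fintype.sum_prod_type]

lemma rungSyndrome_fullThickHZ_mulVec (x : TQubit N nX (m + 1) → ZMod 2) (j : Fin m) :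
    rungSyndrome (fullThickHZ HX HZ (m + 1) *ᵥ x) j =
      layer x j.castSucc + layer x j.succ + HXᵀ *ᵥ bridge x j := by
  funext q
  have hlayer (k : Fin (m + 1)) :
      ((k : ℕ) = j ∨ (k : ℕ) = j + 1) ↔ k ∈ ({j.castSucc, j.succ} : Finset _) := by
    simp [Fin.ext_iff]
  simp only [rungSyndrome, mulVec, dotProduct, fullThickHZ, Fintype.sum_sum_type,
    Fintype.sum_prod_type, hlayer, Fin.val_inj, ite_and, ite_mul, one_mul, zero_mul]
  rw [Finset.sum_comm]
  simp only [Finset.sum_ite_eq', Finset.mem_univ, if_true, Finset.sum_ite_mem, Finset.univ_inter,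
    Finset.sum_pair (Fin.castSucc_lt_succ (i := j)).ne]
  rfl

lemma HZ_mulVec_rungSyndrome (hCSS : HX * HZᵀ = 0) (x : TQubit N nX (m + 1) → ZMod 2)
    (j : Fin m) :
    HZ *ᵥ rungSyndrome (fullThickHZ HX HZ (m + 1) *ᵥ x) j =
      levelSyndrome (fullThickHZ HX HZ (m + 1) *ᵥ x) j.castSucc +
        levelSyndrome (fullThickHZ HX HZ (m + 1) *ᵥ x) j.succ := by
  have hZX : HZ * HXᵀ = 0 := by
    rw [← transpose_transpose (HZ * HXᵀ), transpose_mul, transpose_transpose, hCSS, transpose_zero]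
  rw [rungSyndrome_fullThickHZ_mulVec, mulVec_add, mulVec_add, mulVec_mulVec, hZX, zero_mulVec,
    add_zero, levelSyndrome_fullThickHZ_mulVec, levelSyndrome_fullThickHZ_mulVec]

def layeredVector (d : Fin N → ZMod 2) (τ : Fin m → Fin N → ZMod 2) :
    TQubit N nX (m + 1) → ZMod 2 :=
  Sum.elim (fun qk => (d + Fin.partialSum τ qk.2) qk.1) 0

lemma layer_layeredVector (d : Fin N → ZMod 2) (τ : Fin m → Fin N → ZMod 2) (k : Fin (m + 1)) :
    layer (layeredVector (nX := nX) d τ) k = d + Fin.partialSum τ k :=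
  rfl

lemma bridge_layeredVector (d : Fin N → ZMod 2) (τ : Fin m → Fin N → ZMod 2) (j : Fin m) :
    bridge (layeredVector (nX := nX) d τ) j = 0 :=
  rfl

lemma wt_layeredVector_le (d : Fin N → ZMod 2) (τ : Fin m → Fin N → ZMod 2) :
    wt (layeredVector (nX := nX) d τ) ≤ (m + 1) * (wt d + ∑ j, wt (τ j)) := by
  rw [layeredVector, wt_sumElim, wt_zero, add_zero, wt_prod]
  calc ∑ k : Fin (m + 1), wt (d + Fin.partialSum τ k)
      ≤ ∑ _k : Fin (m + 1), (wt d + ∑ j, wt (τ j)) := Finset.sum_le_sum fun k _ =>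
        (wt_add_le _ _).trans (Nat.add_le_add_left (wt_partialSum_le τ k) _)
    _ = (m + 1) * (wt d + ∑ j, wt (τ j)) := by simp

lemma fullThickHZ_mulVec_layeredVector {S : FullTZIdx N nZ (m + 1) → ZMod 2}
    {d : Fin N → ZMod 2} (hd : HZ *ᵥ d = levelSyndrome S 0)
    (hrung : ∀ j : Fin m, HZ *ᵥ rungSyndrome S j =
      levelSyndrome S j.castSucc + levelSyndrome S j.succ) :
    fullThickHZ HX HZ (m + 1) *ᵥ layeredVector d (rungSyndrome S) = S := by
  refine syndrome_ext (fun k => ?_) (fun j => ?_)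
  · rw [levelSyndrome_fullThickHZ_mulVec, layer_layeredVector, mulVec_add, mulVec_partialSum, hd,
      funext hrung, add_partialSum_telescope]
  · rw [rungSyndrome_fullThickHZ_mulVec, layer_layeredVector, layer_layeredVector,
      bridge_layeredVector, mulVec_zero, add_zero, Fin.partialSum_succ, ← add_assoc d,
      ← add_assoc, add_self_eq_zero_of_zmod_two, zero_add]

end FullThickening

/-- If `C` is `ε`-X-sound for some `ε > 0`, then the fully thickened
code `D` with parameter `l ≥ 2` is `ε′`-X-sound with `ε′ = ε/(l·(1+ε))`. -/
theorem stmt19 (HX : Matrix (Fin nX) (Fin N) (ZMod 2)) (HZ : Matrix (Fin nZ) (Fin N) (ZMod 2))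
    (hCSS : HX * HZ.transpose = 0) (l : ℕ) (hl : 2 ≤ l)
    (ε : ℝ) (hε : 0 < ε) (hsound : XSound ε HZ) :
    XSound (ε / ((l : ℝ) * (1 + ε))) (fullThickHZ HX HZ l) := by
  obtain ⟨m, rfl⟩ : ∃ m, l = m + 1 := ⟨l - 1, by omega⟩
  intro v _
  set S := fullThickHZ HX HZ (m + 1) *ᵥ v
  obtain ⟨w, hw, hwt⟩ := hsound.exists_correction (layer v 0)
  set v' : TQubit N nX (m + 1) → ZMod 2 := layeredVector (layer v 0 + w) (rungSyndrome S)
  have hv' : fullThickHZ HX HZ (m + 1) *ᵥ v' = S := by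
    refine fullThickHZ_mulVec_layeredVector HX HZ ?_ (HZ_mulVec_rungSyndrome HX HZ hCSS v)
    rw [mulVec_add, hw, add_zero, levelSyndrome_fullThickHZ_mulVec]
  refine ⟨v + v', by rw [mulVec_add, hv', add_self_eq_zero_of_zmod_two], ?_⟩
  rw [← add_assoc, add_self_eq_zero_of_zmod_two, zero_add]
  have hv'wt := wt_layeredVector_le (nX := nX) (layer v 0 + w) (rungSyndrome S)
  have hσ := wt_levelSyndrome_le S 0
  rw [levelSyndrome_fullThickHZ_mulVec] at hσ
  exact div_mul_le_of_le_mul_add (t := (∑ j, wt (rungSyndrome S j) : ℕ)) hε (by positivity)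
    (by exact_mod_cast hv'wt) (hwt.trans (by exact_mod_cast hσ))
    (by exact_mod_cast sum_wt_rungSyndrome_le S)
end
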